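/- arXiv:1012.5689 — 6 statements merged into one kernel-verified Lean document; each statement's English description precedes it below -/
import Mathlib

section
/- Let ν be a measure on a separable metric space E that is finite on bounded sets. If there exists a constant c > 0 such that ν(f²) ≤ c·ν(|f|)² for all f ∈ L²(ν), then the support of ν is at most countable. -/
/-!
Testing the inequality on the indicator of a set `A` of positive finite measure gives
`ν A ≤ c · (ν A)²`, i.e. `c · ν A ≥ 1`. Applied to the balls shrinking to a point of the support,
this makes every such point an atom. A measure that is finite on bounded sets is σ-finite, and a
σ-finite measure has only countably many atoms.
-/

open MeasureTheory Real

/-- The topological support of a measure: points all of whose open neighborhoods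
have positive measure. -/
def measSupport {E : Type*} [TopologicalSpace E] [MeasurableSpace E]
    (ν : Measure E) : Set E :=
  {x : E | ∀ U : Set E, IsOpen U → x ∈ U → 0 < ν U}

open Metric Filter Topology ENNReal

theorem one_le_ofReal_mul_measure_of_integral_sq_le {α : Type*} [MeasurableSpace α]
    {ν : Measure α} {c : ℝ}
    (hineq : ∀ f : α → ℝ, MemLp f 2 ν → ∫ x, f x ^ 2 ∂ν ≤ c * (∫ x, |f x| ∂ν) ^ 2)
    {A : Set α} (hA : MeasurableSet A) (hA_ne_top : ν A ≠ ∞) (hA_ne_zero : ν A ≠ 0) :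
    1 ≤ ENNReal.ofReal c * ν A := by
  have h := hineq _ (memLp_indicator_const 2 hA (1 : ℝ) (Or.inr hA_ne_top))
  have hsq : ∀ x, A.indicator (fun _ => (1 : ℝ)) x ^ 2 = A.indicator (fun _ => (1 : ℝ)) x := by
    intro x
    by_cases hx : x ∈ A <;> simp [hx]
  simp only [hsq, abs_of_nonneg (Set.indicator_nonneg (fun _ _ => zero_le_one) _),
    integral_indicator_const _ hA, smul_eq_mul, mul_one] at h
  have hpos : 0 < ν.real A := ENNReal.toReal_pos hA_ne_zero hA_ne_top
  have hreal : 1 ≤ c * ν.real A := by nlinarith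
  rw [← ofReal_measureReal hA_ne_top, ← ENNReal.ofReal_mul' hpos.le]
  exact ENNReal.one_le_ofReal.2 hreal

theorem one_le_mul_measure_singleton_of_mem_measSupport {E : Type*} [MetricSpace E]
    [MeasurableSpace E] [OpensMeasurableSpace E] {ν : Measure E} {C : ℝ≥0∞} (hC : C ≠ ∞)
    (hfin : ∀ s : Set E, Bornology.IsBounded s → ν s < ∞)
    (hlow : ∀ A, MeasurableSet A → ν A ≠ ∞ → ν A ≠ 0 → 1 ≤ C * ν A)
    {x : E} (hx : x ∈ measSupport ν) : 1 ≤ C * ν {x} := by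
  have hball : Tendsto (fun r => ν (ball x r)) (𝓝[>] 0) (𝓝 (ν {x})) := by
    have hfin_one : ν (thickening 1 {x}) ≠ ∞ := by
      rw [thickening_singleton]
      exact (hfin _ isBounded_ball).ne
    simpa only [thickening_singleton] using
      tendsto_measure_thickening_of_isClosed ⟨1, one_pos, hfin_one⟩ isClosed_singleton
  refine ge_of_tendsto (ENNReal.Tendsto.const_mul hball (Or.inr hC)) ?_
  filter_upwards [self_mem_nhdsWithin] with r hr
  exact hlow _ measurableSet_ball (hfin _ isBounded_ball).ne
    (hx _ isOpen_ball (mem_ball_self hr)).ne'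

theorem sigmaFinite_of_isBounded_lt_top {α : Type*} [PseudoMetricSpace α] [MeasurableSpace α]
    {μ : Measure α} (h : ∀ s : Set α, Bornology.IsBounded s → μ s < ∞) : SigmaFinite μ := by
  rcases isEmpty_or_nonempty α with hα | ⟨⟨x⟩⟩
  · infer_instance
  · exact ⟨⟨⟨fun n : ℕ => ball x n, fun _ => trivial, fun _ => h _ isBounded_ball,
      iUnion_ball_nat x⟩⟩⟩

theorem stmt_2_general {E : Type*} [MetricSpace E]
    [MeasurableSpace E] [BorelSpace E] (ν : Measure E)
    (hfin : ∀ s : Set E, Bornology.IsBounded s → ν s < ⊤)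
    (c : ℝ)
    (hineq : ∀ f : E → ℝ, MeasureTheory.MemLp f 2 ν →
      ∫ x, f x ^ 2 ∂ν ≤ c * (∫ x, |f x| ∂ν) ^ 2) :
    (measSupport ν).Countable := by
  have := sigmaFinite_of_isBounded_lt_top hfin
  have hatoms : {x : E | 0 < ν {x}}.Countable :=
    Measure.countable_meas_pos_of_disjoint_iUnion (fun x => measurableSet_singleton x)
      fun _ _ hxy => Set.disjoint_singleton.2 hxy
  have hsupport : ∀ x ∈ measSupport ν, 1 ≤ ENNReal.ofReal c * ν {x} := fun _ hx =>
    one_le_mul_measure_singleton_of_mem_measSupport ENNReal.ofReal_ne_top hfin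
      (fun _ => one_le_ofReal_mul_measure_of_integral_sq_le hineq) hx
  refine hatoms.mono fun x hx => pos_iff_ne_zero.2 fun (hzero : ν {x} = 0) => ?_
  simpa [hzero] using hsupport x hx

theorem stmt_2 {E : Type*} [MetricSpace E] [TopologicalSpace.SeparableSpace E]
    [MeasurableSpace E] [BorelSpace E] (ν : Measure E)
    (hfin : ∀ s : Set E, Bornology.IsBounded s → ν s < ⊤)
    (c : ℝ) (hc : 0 < c)
    (hineq : ∀ f : E → ℝ, MeasureTheory.MemLp f 2 ν →
      ∫ x, f x ^ 2 ∂ν ≤ c * (∫ x, |f x| ∂ν) ^ 2) :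
    (measSupport ν).Countable :=
  stmt_2_general ν hfin c hineq
end

section
/- Let ν be a finite measure on a separable metric space E. If there exists a constant c > 0 such that ν(f²) ≤ c·ν(|f|)² for all f ∈ L²(ν), then the support of ν is a finite set. -/
open MeasureTheory Real

/-! Testing the inequality on the indicator of a set `s` gives `ν(s) ≤ c ν(s)²`, so every open
neighbourhood of a point of the support has mass at least `1 / c`. Shrinking balls, each point of
the support is then an atom of mass at least `1 / c`, and a finite measure has only finitely many
such atoms. -/

open Metric
open scoped ENNReal

theorem one_le_mul_measureReal_of_sq_integral_le {α : Type*} [MeasurableSpace α]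
    {ν : Measure α} [IsFiniteMeasure ν] {c : ℝ}
    (hineq : ∀ f : α → ℝ, MemLp f 2 ν → ∫ x, f x ^ 2 ∂ν ≤ c * (∫ x, |f x| ∂ν) ^ 2)
    {s : Set α} (hs : MeasurableSet s) (hpos : ν s ≠ 0) :
    1 ≤ c * ν.real s := by
  have hsq : (fun x => s.indicator (1 : α → ℝ) x ^ 2) = s.indicator 1 := by
    ext x; by_cases hx : x ∈ s <;> simp [hx]
  have habs : (fun x => |s.indicator (1 : α → ℝ) x|) = s.indicator 1 := by
    ext x; by_cases hx : x ∈ s <;> simp [hx]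
  have h := hineq (s.indicator 1) (memLp_indicator_const 2 hs 1 (Or.inr (measure_ne_top ν s)))
  rw [hsq, habs, integral_indicator_one hs] at h
  have hreal : 0 < ν.real s := ENNReal.toReal_pos hpos (measure_ne_top ν s)
  nlinarith

theorem le_measure_singleton_of_forall_isOpen {E : Type*} [MetricSpace E] [MeasurableSpace E]
    [OpensMeasurableSpace E] (ν : Measure E) [IsFiniteMeasure ν] {ε : ℝ≥0∞} {x : E}
    (h : ∀ U : Set E, IsOpen U → x ∈ U → ε ≤ ν U) : ε ≤ ν {x} := by
  have hlim := tendsto_measure_biInter_gt (μ := ν) (s := ball x) (a := (0 : ℝ))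
    (fun _ _ => measurableSet_ball.nullMeasurableSet) (fun _ _ _ hij => ball_subset_ball hij)
    ⟨1, one_pos, measure_ne_top ν _⟩
  rw [biInter_gt_ball, closedBall_zero] at hlim
  exact ge_of_tendsto hlim
    (eventually_nhdsWithin_of_forall fun r hr => h _ isOpen_ball (mem_ball_self hr))

theorem MeasureTheory.Measure.finite_setOf_le_measure_singleton {α : Type*} [MeasurableSpace α]
    [MeasurableSingletonClass α] (ν : Measure α) [IsFiniteMeasure ν] {ε : ℝ≥0∞}
    (hε : 0 < ε) : {x : α | ε ≤ ν {x}}.Finite :=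
  Measure.finite_const_le_meas_of_disjoint_iUnion ν hε (As := fun x : α => {x})
    measurableSet_singleton (fun _ _ hxy => Set.disjoint_singleton.mpr hxy)
    (measure_ne_top ν _)

theorem stmt_3_general {E : Type*} [MetricSpace E]
    [MeasurableSpace E] [BorelSpace E] (ν : Measure E) [IsFiniteMeasure ν]
    (c : ℝ) (hc : 0 < c)
    (hineq : ∀ f : E → ℝ, MeasureTheory.MemLp f 2 ν →
      ∫ x, f x ^ 2 ∂ν ≤ c * (∫ x, |f x| ∂ν) ^ 2) :
    (measSupport ν).Finite := by
  have hε : 0 < ENNReal.ofReal c⁻¹ := ENNReal.ofReal_pos.mpr (inv_pos.mpr hc)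
  refine (Measure.finite_setOf_le_measure_singleton ν hε).subset
    fun x hx => le_measure_singleton_of_forall_isOpen ν fun U hU hxU => ?_
  have hmass := one_le_mul_measureReal_of_sq_integral_le hineq hU.measurableSet (hx U hU hxU).ne'
  exact ENNReal.ofReal_le_of_le_toReal ((inv_le_iff_one_le_mul₀' hc).mpr hmass)

theorem stmt_3 {E : Type*} [MetricSpace E] [TopologicalSpace.SeparableSpace E]
    [MeasurableSpace E] [BorelSpace E] (ν : Measure E) [IsFiniteMeasure ν]
    (c : ℝ) (hc : 0 < c)
    (hineq : ∀ f : E → ℝ, MeasureTheory.MemLp f 2 ν →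
      ∫ x, f x ^ 2 ∂ν ≤ c * (∫ x, |f x| ∂ν) ^ 2) :
    (measSupport ν).Finite :=
  stmt_3_general ν c hc hineq
end

section
/- For a bounded nonnegative measurable function g and points x, y, the limit as n → ∞ of [(n g(x)+1)² - (n g(y)+1)²]·log((n g(x)+1)/(n g(y)+1))/(n² log n) equals (g(x)² - g(y)²)·(1_{g>0}(x) - 1_{g>0}(y)). -/
/-! The quotient factors as `((n a + 1)/n)² - ((n b + 1)/n)²`, which tends to `a² - b²`, times
`log (n a + 1)/log n - log (n b + 1)/log n`; here `log (n a + 1)/log n → 1` for `a > 0` because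
`log (n a + 1) = log n + log (a + 1/n)`, while it is identically `0` for `a = 0`. -/

open Filter Real Topology

lemma tendsto_mul_add_one_div_self (a : ℝ) :
    Tendsto (fun t : ℝ => (t * a + 1) / t) atTop (𝓝 a) := by
  have h : Tendsto (fun t : ℝ => a + t⁻¹) atTop (𝓝 (a + 0)) :=
    tendsto_const_nhds.add tendsto_inv_atTop_zero
  rw [add_zero] at h
  refine h.congr' ?_
  filter_upwards [eventually_gt_atTop 0] with t ht
  field_simp

lemma tendsto_log_mul_add_one_div_log {a : ℝ} (ha : 0 < a) :
    Tendsto (fun t : ℝ => log (t * a + 1) / log t) atTop (𝓝 1) := by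
  have hshift : Tendsto (fun t : ℝ => a + t⁻¹) atTop (𝓝 a) := by
    simpa using tendsto_const_nhds.add (tendsto_inv_atTop_zero (𝕜 := ℝ))
  have h : Tendsto (fun t : ℝ => 1 + log (a + t⁻¹) / log t) atTop (𝓝 (1 + 0)) :=
    tendsto_const_nhds.add
      (((continuousAt_log ha.ne').tendsto.comp hshift).div_atTop tendsto_log_atTop)
  rw [add_zero] at h
  refine h.congr' ?_
  filter_upwards [eventually_gt_atTop 1] with t ht
  have ht0 : 0 < t := one_pos.trans ht
  have hlog : log t ≠ 0 := (log_pos ht).ne'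
  have hsplit : log (t * a + 1) = log t + log (a + t⁻¹) := by
    rw [← log_mul ht0.ne' (by positivity)]
    congr 1
    field_simp
  rw [hsplit]
  field_simp

lemma tendsto_log_mul_add_one_div_log_of_nonneg {a : ℝ} (ha : 0 ≤ a) :
    Tendsto (fun t : ℝ => log (t * a + 1) / log t) atTop
      (𝓝 (if 0 < a then 1 else 0)) := by
  rcases ha.eq_or_lt with rfl | ha
  · simp
  · simpa [ha] using tendsto_log_mul_add_one_div_log ha

lemma sq_sub_sq_mul_log_div_eq {t a b : ℝ} (ht : 1 < t) (ha : 0 ≤ a) (hb : 0 ≤ b) :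
    ((t * a + 1) ^ 2 - (t * b + 1) ^ 2) * log ((t * a + 1) / (t * b + 1)) / (t ^ 2 * log t) =
      (((t * a + 1) / t) ^ 2 - ((t * b + 1) / t) ^ 2) *
        (log (t * a + 1) / log t - log (t * b + 1) / log t) := by
  have ht0 : 0 < t := one_pos.trans ht
  have hlog : log t ≠ 0 := (log_pos ht).ne'
  have hA : 0 < t * a + 1 := by positivity
  have hB : 0 < t * b + 1 := by positivity
  rw [log_div hA.ne' hB.ne']
  field_simp

theorem tendsto_sq_sub_sq_mul_log_div {a b : ℝ} (ha : 0 ≤ a) (hb : 0 ≤ b) :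
    Tendsto (fun t : ℝ =>
        ((t * a + 1) ^ 2 - (t * b + 1) ^ 2) * log ((t * a + 1) / (t * b + 1)) /
          (t ^ 2 * log t))
      atTop (𝓝 ((a ^ 2 - b ^ 2) * ((if 0 < a then 1 else 0) - (if 0 < b then 1 else 0)))) := by
  have hsq := ((tendsto_mul_add_one_div_self a).pow 2).sub
    ((tendsto_mul_add_one_div_self b).pow 2)
  have hlog := (tendsto_log_mul_add_one_div_log_of_nonneg ha).sub
    (tendsto_log_mul_add_one_div_log_of_nonneg hb)
  refine (hsq.mul hlog).congr' ?_
  filter_upwards [eventually_gt_atTop 1] with t ht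
  exact (sq_sub_sq_mul_log_div_eq ht ha hb).symm

theorem stmt_12_general {E : Type*} (g : E → ℝ) (hgpos : ∀ x, 0 ≤ g x)
    (x y : E) :
    Tendsto (fun n : ℕ =>
        ((n * g x + 1) ^ 2 - (n * g y + 1) ^ 2)
          * Real.log ((n * g x + 1) / (n * g y + 1)) / ((n : ℝ) ^ 2 * Real.log n))
      atTop
      (nhds ((g x ^ 2 - g y ^ 2) *
        ((if 0 < g x then (1 : ℝ) else 0) - (if 0 < g y then (1 : ℝ) else 0)))) :=
  (tendsto_sq_sub_sq_mul_log_div (hgpos x) (hgpos y)).comp tendsto_natCast_atTop_atTop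

theorem stmt_12 {E : Type*} (g : E → ℝ) (hgpos : ∀ x, 0 ≤ g x)
    (hgb : ∃ M : ℝ, ∀ x, g x ≤ M) (x y : E) :
    Tendsto (fun n : ℕ =>
        ((n * g x + 1) ^ 2 - (n * g y + 1) ^ 2)
          * Real.log ((n * g x + 1) / (n * g y + 1)) / ((n : ℝ) ^ 2 * Real.log n))
      atTop
      (nhds ((g x ^ 2 - g y ^ 2) *
        ((if 0 < g x then (1 : ℝ) else 0) - (if 0 < g y then (1 : ℝ) else 0)))) :=
  stmt_12_general g hgpos x y
end

section
/- Let π be the Poisson measure with σ-finite intensity μ on configuration space. For f ∈ L¹(μ) ∩ L^∞(μ), the function F(γ) := exp(γ(f)) satisfies Ent_π(F) = π(F) · ∫ (f e^f - e^f + 1) dμ, where Ent_π(F) = π(F log F) - π(F) log π(F). -/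
/-!
Applied to `t • f`, the Laplace identity says that `X γ = γ(f)` has moment generating function
`t ↦ exp Λ(t)` under `π`, with `Λ(t) = μ(e^{tf} - 1)`. Differentiating at `t = 1` gives
`π(X e^X) = e^{Λ(1)} Λ'(1) = π(e^X) μ(f e^f)`, and since `log F = X`,
`Ent_π(F) = π(X e^X) - π(e^X) Λ(1)`.
-/

open MeasureTheory Real ProbabilityTheory

theorem abs_mul_exp_mul_le {y s M r : ℝ} (hy : |y| ≤ M) (hs : |s| ≤ r) :
    |y * exp (s * y)| ≤ exp (r * M) * |y| := by
  rw [abs_mul, abs_exp, mul_comm]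
  refine mul_le_mul_of_nonneg_right (exp_le_exp.mpr ?_) (abs_nonneg y)
  calc s * y ≤ |s * y| := le_abs_self _
    _ = |s| * |y| := abs_mul s y
    _ ≤ r * M := mul_le_mul hs hy (abs_nonneg y) ((abs_nonneg s).trans hs)

theorem Real.abs_exp_sub_one_le_abs_mul_exp_abs (y : ℝ) : |exp y - 1| ≤ |y| * exp |y| := by
  have lower : y ≤ exp y - 1 := by linarith [add_one_le_exp y]
  have upper : exp y - 1 ≤ y * exp y := by
    have h := mul_le_mul_of_nonneg_left (add_one_le_exp (-y)) (exp_pos y).le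
    rw [← exp_add, add_neg_cancel, exp_zero] at h
    linarith
  have hy : exp y ≤ exp |y| := exp_le_exp.mpr (le_abs_self y)
  have h1 : 1 ≤ exp |y| := one_le_exp (abs_nonneg y)
  rw [abs_le]
  constructor <;> nlinarith [abs_nonneg y, le_abs_self y, neg_abs_le y, exp_pos y]

section BoundedIntegrable

variable {E : Type*} [MeasurableSpace E] {μ : Measure E} {f : E → ℝ} {M : ℝ}

theorem integrable_exp_mul_sub_one (hf : Integrable f μ) (hM : ∀ x, |f x| ≤ M) (t : ℝ) :
    Integrable (fun x ↦ exp (t * f x) - 1) μ := by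
  refine (hf.abs.const_mul (|t| * exp (|t| * M))).mono'
    ((continuous_exp.comp_aestronglyMeasurable (hf.1.const_mul t)).sub
      aestronglyMeasurable_const) (ae_of_all _ fun x ↦ ?_)
  have hmul : |t * f x| ≤ |t| * M := by
    rw [abs_mul]; exact mul_le_mul_of_nonneg_left (hM x) (abs_nonneg t)
  calc ‖exp (t * f x) - 1‖ ≤ |t * f x| * exp |t * f x| :=
        abs_exp_sub_one_le_abs_mul_exp_abs _
    _ ≤ |t * f x| * exp (|t| * M) := by gcongr
    _ = |t| * exp (|t| * M) * |f x| := by rw [abs_mul]; ring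

theorem integrable_mul_exp_mul (hf : Integrable f μ) (hM : ∀ x, |f x| ≤ M) (t : ℝ) :
    Integrable (fun x ↦ f x * exp (t * f x)) μ :=
  (hf.abs.const_mul (exp (|t| * M))).mono'
    (hf.1.mul (continuous_exp.comp_aestronglyMeasurable (hf.1.const_mul t)))
    (ae_of_all _ fun x ↦ abs_mul_exp_mul_le (hM x) le_rfl)

theorem hasDerivAt_integral_exp_mul_sub_one (hf : Integrable f μ) (hM : ∀ x, |f x| ≤ M)
    (t : ℝ) :
    HasDerivAt (fun s ↦ ∫ x, (exp (s * f x) - 1) ∂μ) (∫ x, f x * exp (t * f x) ∂μ) t := by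
  refine (hasDerivAt_integral_of_dominated_loc_of_deriv_le
    (F' := fun s x ↦ f x * exp (s * f x)) (bound := fun x ↦ exp ((|t| + 1) * M) * |f x|)
    (Metric.ball_mem_nhds t one_pos)
    (Filter.Eventually.of_forall fun s ↦ (integrable_exp_mul_sub_one hf hM s).1)
    (integrable_exp_mul_sub_one hf hM t)
    (integrable_mul_exp_mul hf hM t).1
    (ae_of_all _ fun x s hs ↦ abs_mul_exp_mul_le (hM x) ?_)
    (hf.abs.const_mul (exp ((|t| + 1) * M)))
    (ae_of_all _ fun x s _ ↦ ?_)).2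
  · rw [Metric.mem_ball, dist_eq] at hs
    linarith [abs_sub_abs_le_abs_sub s t]
  · simpa [mul_comm] using ((hasDerivAt_mul_const (f x)).exp (x := s)).sub_const 1

end BoundedIntegrable

section MGF

variable {Ω : Type*} [MeasurableSpace Ω] {P : Measure Ω} {X : Ω → ℝ} {φ : ℝ → ℝ} {φ' t : ℝ}

theorem integrable_exp_mul_of_mgf_eq_exp (h : mgf X P t = exp (φ t)) :
    Integrable (fun ω ↦ exp (t * X ω)) P := by
  by_contra hX
  rw [mgf, integral_undef hX] at h
  exact (exp_pos _).ne h

theorem integral_mul_exp_mul_eq_of_mgf_eq_exp (h : ∀ t, mgf X P t = exp (φ t))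
    (hφ : HasDerivAt φ φ' t) :
    ∫ ω, X ω * exp (t * X ω) ∂P = exp (φ t) * φ' := by
  have hset : integrableExpSet X P = Set.univ :=
    Set.eq_univ_of_forall fun s ↦ integrable_exp_mul_of_mgf_eq_exp (h s)
  refine (hasDerivAt_mgf (by simp [hset])).unique ?_
  rw [funext h]
  exact hφ.exp

theorem integral_exp_mul_log_exp_sub_of_mgf_eq_exp (h : ∀ t, mgf X P t = exp (φ t))
    (hφ : HasDerivAt φ φ' 1) :
    ∫ ω, exp (X ω) * log (exp (X ω)) ∂P - (∫ ω, exp (X ω) ∂P) * log (∫ ω, exp (X ω) ∂P)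
      = (∫ ω, exp (X ω) ∂P) * (φ' - φ 1) := by
  have hmgf : ∫ ω, exp (X ω) ∂P = exp (φ 1) := by simpa [mgf] using h 1
  have hderiv := integral_mul_exp_mul_eq_of_mgf_eq_exp h hφ
  simp only [one_mul] at hderiv
  simp only [log_exp, mul_comm (exp _) (X _)]
  rw [hderiv, hmgf, log_exp]
  ring

end MGF

theorem stmt_13_general {E : Type*} [MeasurableSpace E] (μ : Measure E)
    (pm : Measure (Measure E))
    (hLaplace : ∀ g : E → ℝ, Integrable g μ → (∃ M : ℝ, ∀ x, |g x| ≤ M) →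
      ∫ γ, Real.exp (∫ x, g x ∂γ) ∂pm =
        Real.exp (∫ x, (Real.exp (g x) - 1) ∂μ))
    (f : E → ℝ) (hf1 : Integrable f μ) (hfb : ∃ M : ℝ, ∀ x, |f x| ≤ M) :
    (∫ γ, (Real.exp (∫ x, f x ∂γ)) * Real.log (Real.exp (∫ x, f x ∂γ)) ∂pm)
        - (∫ γ, Real.exp (∫ x, f x ∂γ) ∂pm)
            * Real.log (∫ γ, Real.exp (∫ x, f x ∂γ) ∂pm)
      = (∫ γ, Real.exp (∫ x, f x ∂γ) ∂pm)
          * ∫ x, (f x * Real.exp (f x) - Real.exp (f x) + 1) ∂μ := by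
  obtain ⟨M, hM⟩ := hfb
  have hmgf : ∀ t, mgf (fun γ ↦ ∫ x, f x ∂γ) pm t = exp (∫ x, (exp (t * f x) - 1) ∂μ) := by
    intro t
    have htf : ∀ x, |t * f x| ≤ |t| * M := fun x ↦ by
      rw [abs_mul]; exact mul_le_mul_of_nonneg_left (hM x) (abs_nonneg t)
    simpa [mgf, integral_const_mul] using hLaplace _ (hf1.const_mul t) ⟨_, htf⟩
  rw [integral_exp_mul_log_exp_sub_of_mgf_eq_exp hmgf
    (hasDerivAt_integral_exp_mul_sub_one hf1 hM 1)]
  congr 1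
  rw [← integral_sub (integrable_mul_exp_mul hf1 hM 1) (integrable_exp_mul_sub_one hf1 hM 1)]
  congr 1 with x
  simp only [one_mul]
  ring

/-- The entropy identity for exponential functionals of a Poisson measure `pm`
with σ-finite intensity `μ`, where `pm` is characterized by its Laplace
transform. -/
theorem stmt_13 {E : Type*} [MeasurableSpace E] (μ : Measure E) [SigmaFinite μ]
    (pm : Measure (Measure E)) [IsProbabilityMeasure pm]
    (hLaplace : ∀ g : E → ℝ, Integrable g μ → (∃ M : ℝ, ∀ x, |g x| ≤ M) →
      ∫ γ, Real.exp (∫ x, g x ∂γ) ∂pm =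
        Real.exp (∫ x, (Real.exp (g x) - 1) ∂μ))
    (f : E → ℝ) (hf1 : Integrable f μ) (hfb : ∃ M : ℝ, ∀ x, |f x| ≤ M) :
    (∫ γ, (Real.exp (∫ x, f x ∂γ)) * Real.log (Real.exp (∫ x, f x ∂γ)) ∂pm)
        - (∫ γ, Real.exp (∫ x, f x ∂γ) ∂pm)
            * Real.log (∫ γ, Real.exp (∫ x, f x ∂γ) ∂pm)
      = (∫ γ, Real.exp (∫ x, f x ∂γ) ∂pm)
          * ∫ x, (f x * Real.exp (f x) - Real.exp (f x) + 1) ∂μ :=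
  stmt_13_general μ pm hLaplace f hf1 hfb
end

section
/- Suppose that for some λ > 0 and C > 0 the defective Poincaré inequality π(F²) ≤ (1/λ)·E(F,F) + C·π(F)² holds for all F in the domain, where E is the second quantization of a base Dirichlet form E₀ with respect to Poisson measure π with intensity μ. Then μ(f²) ≤ (1/λ)·E₀(f,f) + (C−1)·μ(|f|)² for all f in the domain of E₀. -/
open MeasureTheory Real

theorem stmt_15_general {E : Type*} [MeasurableSpace E] (μ : Measure E)
    (pm : Measure (Measure E))
    (lam C : ℝ) (hlam : 0 < lam)
    (𝔈 : (Measure E → ℝ) → ℝ) (Dom : Set (Measure E → ℝ))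
    (E₀ : (E → ℝ) → ℝ) (Dom₀ : Set (E → ℝ))
    -- for f in the base domain, F(γ) = γ(|f|) belongs to the domain of 𝔈
    (hmem : ∀ f ∈ Dom₀, (fun γ : Measure E => ∫ x, |f x| ∂γ) ∈ Dom)
    -- 𝔈(F,F) = E₀(|f|,|f|) ≤ E₀(f,f)
    (hform : ∀ f ∈ Dom₀, 𝔈 (fun γ : Measure E => ∫ x, |f x| ∂γ) ≤ E₀ f)
    -- second moment formula for Poisson linear functionals
    (hmom2 : ∀ f ∈ Dom₀,
      ∫ γ, (∫ x, |f x| ∂γ) ^ 2 ∂pm = ∫ x, f x ^ 2 ∂μ + (∫ x, |f x| ∂μ) ^ 2)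
    -- first moment formula
    (hmom1 : ∀ f ∈ Dom₀, ∫ γ, (∫ x, |f x| ∂γ) ∂pm = ∫ x, |f x| ∂μ)
    -- the defective Poincaré inequality on Poisson space
    (hPoin : ∀ F ∈ Dom,
      ∫ γ, F γ ^ 2 ∂pm ≤ (1 / lam) * 𝔈 F + C * (∫ γ, F γ ∂pm) ^ 2) :
    ∀ f ∈ Dom₀,
      ∫ x, f x ^ 2 ∂μ ≤ (1 / lam) * E₀ f + (C - 1) * (∫ x, |f x| ∂μ) ^ 2 := by
  intro f hf
  have hPoinF := hPoin _ (hmem f hf)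
  rw [hmom2 f hf, hmom1 f hf] at hPoinF
  have hformF : (1 / lam) * 𝔈 (fun γ : Measure E => ∫ x, |f x| ∂γ) ≤ (1 / lam) * E₀ f := by
    gcongr
    exact hform f hf
  linarith

/-- A defective Poincaré inequality for the second quantization form `𝔈` on the
Poisson space implies the corresponding defective Poincaré inequality for the base
form `E₀` on `L²(μ)`. The second quantization structure is encoded via its action
on the linear functionals `F γ = γ(|f|)`. -/
theorem stmt_15 {E : Type*} [MeasurableSpace E] (μ : Measure E) [SigmaFinite μ]
    (pm : Measure (Measure E)) [IsProbabilityMeasure pm]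
    (lam C : ℝ) (hlam : 0 < lam) (hC : 0 < C)
    (𝔈 : (Measure E → ℝ) → ℝ) (Dom : Set (Measure E → ℝ))
    (E₀ : (E → ℝ) → ℝ) (Dom₀ : Set (E → ℝ))
    -- for f in the base domain, F(γ) = γ(|f|) belongs to the domain of 𝔈
    (hmem : ∀ f ∈ Dom₀, (fun γ : Measure E => ∫ x, |f x| ∂γ) ∈ Dom)
    -- 𝔈(F,F) = E₀(|f|,|f|) ≤ E₀(f,f)
    (hform : ∀ f ∈ Dom₀, 𝔈 (fun γ : Measure E => ∫ x, |f x| ∂γ) ≤ E₀ f)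
    -- second moment formula for Poisson linear functionals
    (hmom2 : ∀ f ∈ Dom₀,
      ∫ γ, (∫ x, |f x| ∂γ) ^ 2 ∂pm = ∫ x, f x ^ 2 ∂μ + (∫ x, |f x| ∂μ) ^ 2)
    -- first moment formula
    (hmom1 : ∀ f ∈ Dom₀, ∫ γ, (∫ x, |f x| ∂γ) ∂pm = ∫ x, |f x| ∂μ)
    -- the defective Poincaré inequality on Poisson space
    (hPoin : ∀ F ∈ Dom,
      ∫ γ, F γ ^ 2 ∂pm ≤ (1 / lam) * 𝔈 F + C * (∫ γ, F γ ∂pm) ^ 2) :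
    ∀ f ∈ Dom₀,
      ∫ x, f x ^ 2 ∂μ ≤ (1 / lam) * E₀ f + (C - 1) * (∫ x, |f x| ∂μ) ^ 2 :=
  stmt_15_general μ pm lam C hlam 𝔈 Dom E₀ Dom₀ hmem hform hmom2 hmom1 hPoin
end

section
/- Suppose the log-Sobolev inequality Ent_π(F²) ≤ C·E(F,F) holds for the second quantization Dirichlet form E on Poisson space with some constant C > 0, where the base form E₀ is a Dirichlet form on L²(μ) with μ nontrivial. Applying it to F(γ) = e^{γ(f)} for f = log(n g + 1) with g ≥ 0 nontrivial in the base domain, dividing by n² log n, and letting n → ∞ yields μ(g²) ≤ 0, a contradiction. Hence the second quantization Dirichlet form never satisfies a log-Sobolev inequality when μ is nontrivial. -/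
/-!
Test the inequality on `F γ = exp (γ (log (n f₀ + 1)))`. Both sides carry the factor `pm(F²)`;
after cancelling it, the energy side is `C n² E₀ f₀`, while the entropy side is
`∫ ψ(n f₀ + 1) dμ` with `ψ u = 2u² log u - u² + 1 ≥ (u - 1)² log u` (`entropyIntegrand`),
hence at least `n² log (nε + 1) ∫_{f₀ ≥ ε} f₀² dμ`, which is positive for small `ε`.
Dividing by `n²` bounds `log (nε + 1)` uniformly in `n`, which is absurd.
-/

open MeasureTheory Real Filter

noncomputable def entropyIntegrand (u : ℝ) : ℝ := 2 * u ^ 2 * log u - u ^ 2 + 1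

lemma entropyIntegrand_exp (t : ℝ) :
    entropyIntegrand (exp t) = 2 * t * exp (2 * t) - exp (2 * t) + 1 := by
  rw [entropyIntegrand, log_exp, ← exp_nat_mul]
  push_cast
  ring_nf

-- With `log u ≥ 1 - 1/u`, the difference is at least `(u - 1)² / u`.
lemma sq_sub_one_mul_log_le_entropyIntegrand {u : ℝ} (hu : 1 ≤ u) :
    (u - 1) ^ 2 * log u ≤ entropyIntegrand u := by
  have hu0 : 0 < u := by linarith
  have hlog := one_sub_inv_le_log_of_pos hu0
  have hinv : u * u⁻¹ = 1 := mul_inv_cancel₀ hu0.ne'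
  unfold entropyIntegrand
  nlinarith [mul_le_mul_of_nonneg_left hlog (by nlinarith : 0 ≤ u ^ 2 + 2 * u - 1)]

lemma entropyIntegrand_nonneg {u : ℝ} (hu : 1 ≤ u) : 0 ≤ entropyIntegrand u :=
  (mul_nonneg (sq_nonneg _) (log_nonneg hu)).trans (sq_sub_one_mul_log_le_entropyIntegrand hu)

lemma entropyIntegrand_le {u : ℝ} (hu : 1 ≤ u) : entropyIntegrand u ≤ 2 * u ^ 2 * (u - 1) := by
  have hlog := log_le_sub_one_of_pos (by linarith : 0 < u)
  unfold entropyIntegrand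
  nlinarith

section Integrals

variable {E : Type*} [MeasurableSpace E] {μ : Measure E} {f : E → ℝ}

-- `∫_{f < ε} f² ≤ ε ∫ f`, which is below `∫ f²` once `ε` is small.
lemma exists_pos_setIntegral_le_sq_pos (hmf : Measurable f) (hf : 0 ≤ f)
    (hf1 : Integrable f μ) (hf2 : Integrable (fun x => f x ^ 2) μ)
    (hpos : 0 < ∫ x, f x ^ 2 ∂μ) :
    ∃ ε > 0, 0 < ∫ x in {x | ε ≤ f x}, f x ^ 2 ∂μ := by
  obtain ⟨ε, hε, hεlt⟩ := exists_pos_mul_lt hpos (∫ x, f x ∂μ)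
  refine ⟨ε, hε, ?_⟩
  have hA : MeasurableSet {x | ε ≤ f x} := measurableSet_le measurable_const hmf
  have hcompl : ∫ x in {x | ε ≤ f x}ᶜ, f x ^ 2 ∂μ ≤ ∫ x in {x | ε ≤ f x}ᶜ, f x * ε ∂μ := by
    refine setIntegral_mono_on hf2.integrableOn (hf1.mul_const ε).integrableOn hA.compl
      fun x hx => ?_
    rw [sq]
    exact mul_le_mul_of_nonneg_left (not_le.mp (show ¬ε ≤ f x from hx)).le (hf x)
  have hsmall : ∫ x in {x | ε ≤ f x}ᶜ, f x * ε ∂μ ≤ (∫ x, f x ∂μ) * ε := by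
    rw [integral_mul_const]
    exact mul_le_mul_of_nonneg_right (setIntegral_le_integral hf1 (.of_forall hf)) hε.le
  linarith [integral_add_compl hA hf2]

lemma integrable_entropyIntegrand_mul_add_one (hmf : Measurable f) (hf : 0 ≤ f)
    {M : ℝ} (hM : ∀ x, f x ≤ M) (hf1 : Integrable f μ) {n : ℝ} (hn : 0 ≤ n) :
    Integrable (fun x => entropyIntegrand (n * f x + 1)) μ := by
  have hmeas : Measurable fun x => entropyIntegrand (n * f x + 1) := by
    unfold entropyIntegrand; fun_prop
  refine (hf1.const_mul (2 * (n * M + 1) ^ 2 * n)).mono' hmeas.aestronglyMeasurable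
    (.of_forall fun x => ?_)
  have hnf : 0 ≤ n * f x := mul_nonneg hn (hf x)
  have hu : 1 ≤ n * f x + 1 := by linarith
  rw [norm_of_nonneg (entropyIntegrand_nonneg hu)]
  calc entropyIntegrand (n * f x + 1) ≤ 2 * (n * f x + 1) ^ 2 * (n * f x) := by
        simpa using entropyIntegrand_le hu
    _ ≤ 2 * (n * M + 1) ^ 2 * (n * f x) := by gcongr; exact hM x
    _ = 2 * (n * M + 1) ^ 2 * n * f x := by ring

lemma mul_log_mul_setIntegral_le_integral_entropyIntegrand (hmf : Measurable f) (hf : 0 ≤ f)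
    {n ε : ℝ} (hn : 0 ≤ n) (hε : 0 ≤ ε)
    (hint : Integrable (fun x => entropyIntegrand (n * f x + 1)) μ) :
    n ^ 2 * log (n * ε + 1) * ∫ x in {x | ε ≤ f x}, f x ^ 2 ∂μ
      ≤ ∫ x, entropyIntegrand (n * f x + 1) ∂μ := by
  have hA : MeasurableSet {x | ε ≤ f x} := measurableSet_le measurable_const hmf
  have hlog : 0 ≤ log (n * ε + 1) := log_nonneg (by nlinarith)
  rw [← integral_const_mul, ← integral_indicator hA]
  refine integral_mono_of_nonneg (.of_forall fun x => ?_) hint (.of_forall fun x => ?_)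
  · exact Set.indicator_nonneg (fun x _ => by positivity) x
  · have hu : 1 ≤ n * f x + 1 := by nlinarith [mul_nonneg hn (hf x)]
    by_cases hx : x ∈ {x | ε ≤ f x}
    · rw [Set.indicator_of_mem hx]
      calc n ^ 2 * log (n * ε + 1) * f x ^ 2
          = (n * f x + 1 - 1) ^ 2 * log (n * ε + 1) := by ring
        _ ≤ (n * f x + 1 - 1) ^ 2 * log (n * f x + 1) := by gcongr; exact hx
        _ ≤ entropyIntegrand (n * f x + 1) := sq_sub_one_mul_log_le_entropyIntegrand hu
    · rw [Set.indicator_of_notMem hx]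
      exact entropyIntegrand_nonneg hu

end Integrals

theorem stmt_17_general {E : Type*} [MeasurableSpace E] (μ : Measure E)
    (pm : Measure (Measure E))
    (𝔈 : (Measure E → ℝ) → ℝ) (Dom : Set (Measure E → ℝ))
    (E₀ : (E → ℝ) → ℝ) (Dom₀ : Set (E → ℝ))
    -- μ is nontrivial: there is a nontrivial nonnegative bounded f₀ in the base domain
    (f₀ : E → ℝ) (hmf₀ : Measurable f₀)
    (hf₀pos : ∀ x, 0 ≤ f₀ x) (hf₀b : ∃ M : ℝ, ∀ x, f₀ x ≤ M)
    (hf₀1 : Integrable f₀ μ) (hf₀2 : Integrable (fun x => f₀ x ^ 2) μ)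
    (hnontriv : 0 < ∫ x, f₀ x ^ 2 ∂μ)
    -- the base domain is closed under f₀ ↦ log (n f₀ + 1)
    (hclosed : ∀ n : ℕ, (fun x => Real.log (n * f₀ x + 1)) ∈ Dom₀)
    -- exponential functionals of base-domain functions belong to the domain of 𝔈
    (hmemDom : ∀ f ∈ Dom₀,
      (fun γ : Measure E => Real.exp (∫ x, f x ∂γ)) ∈ Dom)
    -- entropy identity: Ent_pm(F²) = pm(F²)·∫(2 f e^{2f} − e^{2f} + 1) dμ
    (hEnt : ∀ f ∈ Dom₀,
      (∫ γ, (Real.exp (∫ x, f x ∂γ)) ^ 2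
          * Real.log ((Real.exp (∫ x, f x ∂γ)) ^ 2) ∂pm)
        - (∫ γ, (Real.exp (∫ x, f x ∂γ)) ^ 2 ∂pm)
            * Real.log (∫ γ, (Real.exp (∫ x, f x ∂γ)) ^ 2 ∂pm)
      = (∫ γ, (Real.exp (∫ x, f x ∂γ)) ^ 2 ∂pm)
          * ∫ x, (2 * f x * Real.exp (2 * f x) - Real.exp (2 * f x) + 1) ∂μ)
    -- energy identity: 𝔈(F,F) = pm(F²)·E₀(e^f − 1, e^f − 1)
    (hEform : ∀ f ∈ Dom₀,
      𝔈 (fun γ : Measure E => Real.exp (∫ x, f x ∂γ))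
        = (∫ γ, (Real.exp (∫ x, f x ∂γ)) ^ 2 ∂pm)
            * E₀ (fun x => Real.exp (f x) - 1))
    (hfin : ∀ f ∈ Dom₀, 0 < ∫ γ, (Real.exp (∫ x, f x ∂γ)) ^ 2 ∂pm)
    -- E₀ is quadratic
    (hscale : ∀ (c : ℝ) (f : E → ℝ), E₀ (fun x => c * f x) = c ^ 2 * E₀ f) :
    ¬ ∃ C : ℝ, 0 < C ∧ ∀ F ∈ Dom,
        (∫ γ, F γ ^ 2 * Real.log (F γ ^ 2) ∂pm)
            - (∫ γ, F γ ^ 2 ∂pm) * Real.log (∫ γ, F γ ^ 2 ∂pm)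
          ≤ C * 𝔈 F := by
  rintro ⟨C, -, hLSI⟩
  obtain ⟨M, hM⟩ := hf₀b
  obtain ⟨ε, hε, hA⟩ := exists_pos_setIntegral_le_sq_pos hmf₀ hf₀pos hf₀1 hf₀2 hnontriv
  set IA := ∫ x in {x | ε ≤ f₀ x}, f₀ x ^ 2 ∂μ
  have hbound : ∀ n : ℕ, 0 < n → log (n * ε + 1) * IA ≤ C * E₀ f₀ := by
    intro n hn
    have hexp (x : E) : exp (log (n * f₀ x + 1)) = n * f₀ x + 1 :=
      exp_log (by positivity [hf₀pos x])
    have hLSIn := hLSI _ (hmemDom _ (hclosed n))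
    rw [hEnt _ (hclosed n), hEform _ (hclosed n)] at hLSIn
    simp only [← entropyIntegrand_exp, hexp, add_sub_cancel_right, hscale] at hLSIn
    have hent : ∫ x, entropyIntegrand (n * f₀ x + 1) ∂μ ≤ C * (n ^ 2 * E₀ f₀) :=
      le_of_mul_le_mul_left (by linarith) (hfin _ (hclosed n))
    have hlow := mul_log_mul_setIntegral_le_integral_entropyIntegrand hmf₀ hf₀pos
      n.cast_nonneg hε.le (integrable_entropyIntegrand_mul_add_one hmf₀ hf₀pos hM hf₀1 n.cast_nonneg)
    have hn2 : (0 : ℝ) < n ^ 2 := by positivity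
    exact le_of_mul_le_mul_left (by linarith) hn2
  have hlim : Tendsto (fun n : ℕ => log (n * ε + 1) * IA) atTop atTop :=
    (tendsto_log_atTop.comp (tendsto_atTop_add_const_right _ 1
      (tendsto_natCast_atTop_atTop.atTop_mul_const hε))).atTop_mul_const hA
  obtain ⟨n, hgt, hn⟩ :=
    ((hlim.eventually_gt_atTop (C * E₀ f₀)).and (eventually_gt_atTop 0)).exists
  exact (hbound n hn).not_gt hgt

/-- The second quantization Dirichlet form `𝔈` on Poisson space never satisfies a
log-Sobolev inequality `Ent_pm(F²) ≤ C·𝔈(F,F)` when the intensity `μ` is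
nontrivial. The Poisson structure is encoded through the entropy and energy
identities for the exponential functionals `F γ = exp(γ(f))`, which follow from
the Laplace transform of `pm`. -/
theorem stmt_17 {E : Type*} [MeasurableSpace E] (μ : Measure E) [SigmaFinite μ]
    (pm : Measure (Measure E)) [IsProbabilityMeasure pm]
    (𝔈 : (Measure E → ℝ) → ℝ) (Dom : Set (Measure E → ℝ))
    (E₀ : (E → ℝ) → ℝ) (Dom₀ : Set (E → ℝ))
    -- μ is nontrivial: there is a nontrivial nonnegative bounded f₀ in the base domain
    (f₀ : E → ℝ) (hf₀ : f₀ ∈ Dom₀) (hmf₀ : Measurable f₀)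
    (hf₀pos : ∀ x, 0 ≤ f₀ x) (hf₀b : ∃ M : ℝ, ∀ x, f₀ x ≤ M)
    (hf₀1 : Integrable f₀ μ) (hf₀2 : Integrable (fun x => f₀ x ^ 2) μ)
    (hnontriv : 0 < ∫ x, f₀ x ^ 2 ∂μ)
    -- the base domain is closed under f₀ ↦ log (n f₀ + 1)
    (hclosed : ∀ n : ℕ, (fun x => Real.log (n * f₀ x + 1)) ∈ Dom₀)
    -- exponential functionals of base-domain functions belong to the domain of 𝔈
    (hmemDom : ∀ f ∈ Dom₀,
      (fun γ : Measure E => Real.exp (∫ x, f x ∂γ)) ∈ Dom)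
    -- entropy identity: Ent_pm(F²) = pm(F²)·∫(2 f e^{2f} − e^{2f} + 1) dμ
    (hEnt : ∀ f ∈ Dom₀,
      (∫ γ, (Real.exp (∫ x, f x ∂γ)) ^ 2
          * Real.log ((Real.exp (∫ x, f x ∂γ)) ^ 2) ∂pm)
        - (∫ γ, (Real.exp (∫ x, f x ∂γ)) ^ 2 ∂pm)
            * Real.log (∫ γ, (Real.exp (∫ x, f x ∂γ)) ^ 2 ∂pm)
      = (∫ γ, (Real.exp (∫ x, f x ∂γ)) ^ 2 ∂pm)
          * ∫ x, (2 * f x * Real.exp (2 * f x) - Real.exp (2 * f x) + 1) ∂μ)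
    -- energy identity: 𝔈(F,F) = pm(F²)·E₀(e^f − 1, e^f − 1)
    (hEform : ∀ f ∈ Dom₀,
      𝔈 (fun γ : Measure E => Real.exp (∫ x, f x ∂γ))
        = (∫ γ, (Real.exp (∫ x, f x ∂γ)) ^ 2 ∂pm)
            * E₀ (fun x => Real.exp (f x) - 1))
    (hfin : ∀ f ∈ Dom₀, 0 < ∫ γ, (Real.exp (∫ x, f x ∂γ)) ^ 2 ∂pm)
    -- E₀ is quadratic
    (hscale : ∀ (c : ℝ) (f : E → ℝ), E₀ (fun x => c * f x) = c ^ 2 * E₀ f) :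
    ¬ ∃ C : ℝ, 0 < C ∧ ∀ F ∈ Dom,
        (∫ γ, F γ ^ 2 * Real.log (F γ ^ 2) ∂pm)
            - (∫ γ, F γ ^ 2 ∂pm) * Real.log (∫ γ, F γ ^ 2 ∂pm)
          ≤ C * 𝔈 F :=
  stmt_17_general μ pm 𝔈 Dom E₀ Dom₀ f₀ hmf₀ hf₀pos hf₀b hf₀1 hf₀2 hnontriv hclosed hmemDom hEnt
    hEform hfin hscale
end
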